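/- arXiv:2404.12327 — 4 statements merged into one kernel-verified Lean document; each statement's English description precedes it below -/
import Mathlib

section
/- Gaplessness Criteria (Theorem 1, abstract form). Let H be a nontrivial complex Hilbert space and A : H → H a bounded self-adjoint operator that is negative semidefinite and has trivial kernel. Then the following four statements are equivalent: (a) for every t > 0, the operator norm of exp(t·A) equals 1 (equivalently, sup over nonzero φ of ‖exp(t·A)φ‖/‖φ‖ = 1); (b) the infimum over nonzero φ of ‖Aφ‖/‖φ‖ equals 0; (c) the supremum over nonzero φ of Re⟨φ, Aφ⟩/‖φ‖² equals 0; (d) 0 is an accumulation point of the spectrum of A, i.e. for every ε > 0 there exists λ in the spectrum of A with 0 < |λ| < ε. -/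
/-!
Each of the four conditions is equivalent to `A` not being invertible. Since `A ≤ 0`, the norm
of `exp (t • A) = cfc exp (t • A)` is `exp` of the largest point of `t • σ(A) ⊆ (-∞, 0]`, which
is `1` exactly when `0 ∈ σ(A)`. A self-adjoint operator bounded below has closed range whose
orthogonal complement is its kernel, so it is invertible; this gives (b). A nonpositive element
is invertible iff its spectrum stays below some `-δ`, i.e. iff `A ≤ -δ`; this gives (c). If `0`
were an isolated point of `σ(A)`, applying the functional calculus to a bump function at `0`
would produce a nonzero `P` with `A * P = 0`, contradicting injectivity; this gives (d).
-/

open scoped InnerProductSpace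

lemma Real.iInf_eq_zero_iff_not_exists_pos_le {ι : Type*} [Nonempty ι] {f : ι → ℝ}
    (hf : ∀ i, 0 ≤ f i) : ⨅ i, f i = 0 ↔ ¬∃ c > 0, ∀ i, c ≤ f i := by
  constructor
  · rintro h ⟨c, hc, hcf⟩
    exact (le_ciInf hcf).not_gt (h ▸ hc)
  · intro h
    refine le_antisymm (not_lt.mp fun hpos => h ⟨_, hpos, fun i => ciInf_le ⟨0, ?_⟩ i⟩)
      (le_ciInf hf)
    rintro _ ⟨i, rfl⟩
    exact hf i

lemma Real.iSup_eq_zero_iff_not_exists_pos_le_neg {ι : Type*} [Nonempty ι] {f : ι → ℝ}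
    (hf : ∀ i, f i ≤ 0) : ⨆ i, f i = 0 ↔ ¬∃ δ > 0, ∀ i, f i ≤ -δ := by
  constructor
  · rintro h ⟨δ, hδ, hfδ⟩
    have := ciSup_le hfδ
    linarith
  · intro h
    refine le_antisymm (ciSup_le hf) (not_lt.mp fun hneg => h ⟨_, neg_pos.mpr hneg,
      fun i => ?_⟩)
    rw [neg_neg]
    exact le_ciSup ⟨0, by rintro _ ⟨i, rfl⟩; exact hf i⟩ i

section CStarAlgebra

variable {A : Type*} [CStarAlgebra A]

lemma exists_ne_zero_mul_eq_zero_of_isolated_zero_mem_spectrum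
    {a : A} [IsStarNormal a] (h0 : 0 ∈ spectrum ℂ a) {ε : ℝ} (hε : 0 < ε)
    (hiso : ∀ z ∈ spectrum ℂ a, z ≠ 0 → ε ≤ ‖z‖) : ∃ p : A, p ≠ 0 ∧ a * p = 0 := by
  set f : ℂ → ℂ := fun z => ((max (1 - ‖z‖ / ε) 0 : ℝ) : ℂ)
  have hzf : ∀ z ∈ spectrum ℂ a, z * f z = 0 := by
    intro z hz
    rcases eq_or_ne z 0 with rfl | hz0
    · exact zero_mul _
    · have : 1 - ‖z‖ / ε ≤ 0 := by
        rw [sub_nonpos, one_le_div hε]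
        exact hiso z hz hz0
      simp [f, max_eq_right this]
  refine ⟨cfc f a, fun hp => ?_, ?_⟩
  · have h1 : (1 : ℂ) ∈ spectrum ℂ (cfc f a) := by
      rw [cfc_map_spectrum f a]
      exact ⟨0, h0, by simp [f]⟩
    rw [hp, spectrum.mem_iff] at h1
    simp at h1
  · calc a * cfc f a = cfc (fun z => z * f z) a := by
          rw [cfc_mul (fun z => z) f a, cfc_id' ℂ a]
      _ = cfc (0 : ℂ → ℂ) a := cfc_congr hzf
      _ = 0 := cfc_zero ℂ a

lemma forall_exists_mem_spectrum_norm_lt_iff_not_isUnit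
    {a : A} [IsStarNormal a] (ha : ∀ p : A, a * p = 0 → p = 0) :
    (∀ ε : ℝ, 0 < ε → ∃ z ∈ spectrum ℂ a, 0 < ‖z‖ ∧ ‖z‖ < ε) ↔ ¬IsUnit a := by
  rw [← spectrum.zero_mem_iff ℂ]
  constructor
  · intro h
    rw [← (spectrum.isClosed a).closure_eq, Metric.mem_closure_iff]
    intro ε hε
    obtain ⟨z, hz, -, hzε⟩ := h ε hε
    exact ⟨z, hz, by rwa [dist_zero_left]⟩
  · intro h0 ε hε
    by_contra! hiso
    obtain ⟨p, hp, hap⟩ := exists_ne_zero_mul_eq_zero_of_isolated_zero_mem_spectrum h0 hε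
      fun z hz hz0 => hiso z hz (norm_pos_iff.mpr hz0)
    exact hp (ha p hap)

section Order

variable [PartialOrder A] [StarOrderedRing A]

lemma isUnit_iff_exists_le_algebraMap_neg [Nontrivial A] {a : A} (ha : a ≤ 0) :
    IsUnit a ↔ ∃ δ > 0, a ≤ algebraMap ℝ A (-δ) := by
  have hspec : ∀ x ∈ spectrum ℝ (-a), 0 ≤ x := spectrum_nonneg_of_nonneg (neg_nonneg.mpr ha)
  rw [← IsUnit.neg_iff, ← not_not (a := IsUnit (-a)), ← spectrum.zero_mem_iff ℝ]
  have hle : ∀ δ : ℝ, a ≤ algebraMap ℝ A (-δ) ↔ algebraMap ℝ A δ ≤ -a := fun δ => by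
    rw [map_neg, le_neg]
  simp_rw [hle]
  rw [CFC.exists_pos_algebraMap_le_iff (IsSelfAdjoint.of_nonneg (neg_nonneg.mpr ha))]
  exact ⟨fun h x hx => (hspec x hx).lt_of_ne (by rintro rfl; exact h hx),
    fun h h0 => (h 0 h0).false⟩

lemma norm_exp_eq_one_iff_zero_mem_spectrum [Nontrivial A] {a : A} (ha : a ≤ 0) :
    ‖NormedSpace.exp a‖ = 1 ↔ (0 : ℝ) ∈ spectrum ℝ a := by
  have hsa : IsSelfAdjoint a := by simpa using (IsSelfAdjoint.of_nonneg (neg_nonneg.mpr ha)).neg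
  have hspec : ∀ x ∈ spectrum ℝ a, x ≤ 0 := by
    simpa using (le_algebraMap_iff_spectrum_le (r := (0 : ℝ)) hsa).mp (by simpa using ha)
  have hG := IsGreatest.norm_cfc Real.exp a
  rw [← CFC.real_exp_eq_normedSpace_exp]
  constructor
  · intro h
    obtain ⟨x, hx, hx1⟩ := h ▸ hG.1
    dsimp only at hx1
    rw [Real.norm_of_nonneg (Real.exp_pos x).le, Real.exp_eq_one_iff] at hx1
    exact hx1 ▸ hx
  · intro h0
    refine hG.unique ⟨⟨0, h0, by simp⟩, ?_⟩
    rintro _ ⟨x, hx, rfl⟩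
    simpa [Real.norm_of_nonneg (Real.exp_pos x).le] using hspec x hx

lemma forall_norm_exp_smul_eq_one_iff_not_isUnit [Nontrivial A] {a : A} (ha : a ≤ 0) :
    (∀ t : ℝ, 0 < t → ‖NormedSpace.exp (t • a)‖ = 1) ↔ ¬IsUnit a := by
  have key : ∀ t : ℝ, 0 < t → (‖NormedSpace.exp (t • a)‖ = 1 ↔ ¬IsUnit a) := fun t ht => by
    rw [norm_exp_eq_one_iff_zero_mem_spectrum (smul_nonpos_of_nonneg_of_nonpos ht.le ha),
      spectrum.zero_mem_iff, ← Units.val_mk0 ht.ne', ← Units.smul_def, isUnit_smul_iff]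
  exact ⟨fun h => (key 1 one_pos).mp (h 1 one_pos), fun h t ht => (key t ht).mpr h⟩

end Order

end CStarAlgebra

section InnerProductSpace

variable {𝕜 E : Type*} [RCLike 𝕜] [NormedAddCommGroup E] [InnerProductSpace 𝕜 E] [CompleteSpace E]

lemma IsSelfAdjoint.isUnit_iff_exists_mul_le_norm {T : E →L[𝕜] E} (hT : IsSelfAdjoint T) :
    IsUnit T ↔ ∃ c > 0, ∀ x, c * ‖x‖ ≤ ‖T x‖ := by
  rw [← antilipschitzWith_iff_exists_mul_le_norm]
  refine ⟨fun hu => T.antilipschitz_of_isEmbedding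
    (ContinuousLinearMap.isHomeomorph_of_isUnit hu).isEmbedding, fun ⟨K, hK⟩ => ?_⟩
  have hclosed : IsClosed (LinearMap.range (T : E →ₗ[𝕜] E) : Set E) := by
    simpa [LinearMap.coe_range] using hK.isClosed_range T.uniformContinuous
  have hrange : LinearMap.range (T : E →ₗ[𝕜] E) = ⊤ := by
    rw [← hclosed.submodule_topologicalClosure_eq, ← Submodule.orthogonal_orthogonal_eq_closure,
      hT.isSymmetric.orthogonal_range, LinearMap.ker_eq_bot.mpr hK.injective,
      Submodule.bot_orthogonal_eq_top]
  exact ContinuousLinearMap.isUnit_iff_bijective.mpr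
    ⟨hK.injective, LinearMap.range_eq_top.mp hrange⟩

lemma IsSelfAdjoint.iInf_norm_apply_div_norm_eq_zero_iff [Nontrivial E] {T : E →L[𝕜] E}
    (hT : IsSelfAdjoint T) : (⨅ x : {x : E // x ≠ 0}, ‖T x.1‖ / ‖x.1‖) = 0 ↔ ¬IsUnit T := by
  have := nonempty_subtype.mpr (exists_ne (0 : E))
  have hquot : ∀ c : ℝ, (∀ x : {x : E // x ≠ 0}, c ≤ ‖T x.1‖ / ‖x.1‖) ↔
      ∀ x, c * ‖x‖ ≤ ‖T x‖ := fun c => by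
    refine ⟨fun h x => ?_, fun h x => (le_div_iff₀ (norm_pos_iff.mpr x.2)).mpr (h x)⟩
    rcases eq_or_ne x 0 with rfl | hx
    · simp
    · exact (le_div_iff₀ (norm_pos_iff.mpr hx)).mp (h ⟨x, hx⟩)
  simp_rw [Real.iInf_eq_zero_iff_not_exists_pos_le fun x : {x : E // x ≠ 0} =>
    div_nonneg (norm_nonneg (T x.1)) (norm_nonneg x.1), hquot,
    hT.isUnit_iff_exists_mul_le_norm]

end InnerProductSpace

namespace ContinuousLinearMap

variable {H : Type*} [NormedAddCommGroup H] [InnerProductSpace ℂ H] [CompleteSpace H]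

lemma le_algebraMap_iff_forall_reApplyInnerSelf_le {T : H →L[ℂ] H} (hT : IsSelfAdjoint T)
    (r : ℝ) : T ≤ algebraMap ℝ (H →L[ℂ] H) r ↔ ∀ x, T.reApplyInnerSelf x ≤ r * ‖x‖ ^ 2 := by
  have happly : ∀ x, (algebraMap ℝ (H →L[ℂ] H) r - T).reApplyInnerSelf x =
      r * ‖x‖ ^ 2 - T.reApplyInnerSelf x := fun x => by
    simp [reApplyInnerSelf_apply, Algebra.algebraMap_eq_smul_one, inner_sub_left,
      ← Complex.coe_smul, inner_smul_left, ← Complex.ofReal_pow]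
  simp [le_def, isPositive_def', ((IsSelfAdjoint.algebraMap _ (.all r)).sub hT), happly]

lemma iSup_rayleighQuotient_eq_zero_iff [Nontrivial H] {T : H →L[ℂ] H} (hT : T ≤ 0) :
    (⨆ x : {x : H // x ≠ 0}, T.rayleighQuotient x.1) = 0 ↔ ¬IsUnit T := by
  have := nonempty_subtype.mpr (exists_ne (0 : H))
  have hsa : IsSelfAdjoint T := by simpa using (IsSelfAdjoint.of_nonneg (neg_nonneg.mpr hT)).neg
  have hquot : ∀ δ : ℝ, (∀ x : {x : H // x ≠ 0}, T.rayleighQuotient x.1 ≤ -δ) ↔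
      ∀ x, T.reApplyInnerSelf x ≤ -δ * ‖x‖ ^ 2 := fun δ => by
    refine ⟨fun h x => ?_, fun h x => (div_le_iff₀ (pow_pos (norm_pos_iff.mpr x.2) 2)).mpr (h x)⟩
    rcases eq_or_ne x 0 with rfl | hx
    · simp [reApplyInnerSelf_apply]
    · exact (div_le_iff₀ (pow_pos (norm_pos_iff.mpr hx) 2)).mp (h ⟨x, hx⟩)
  have hnonpos : ∀ x : {x : H // x ≠ 0}, T.rayleighQuotient x.1 ≤ 0 := fun x =>
    div_nonpos_of_nonpos_of_nonneg (by simpa using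
      (le_algebraMap_iff_forall_reApplyInnerSelf_le hsa 0).mp (by simpa using hT) x)
      (by positivity)
  simp_rw [Real.iSup_eq_zero_iff_not_exists_pos_le_neg hnonpos, hquot,
    isUnit_iff_exists_le_algebraMap_neg hT, le_algebraMap_iff_forall_reApplyInnerSelf_le hsa]

end ContinuousLinearMap

open ContinuousLinearMap in
theorem gaplessness_criteria_general
    {H : Type*} [NormedAddCommGroup H] [InnerProductSpace ℂ H] [CompleteSpace H]
    [Nontrivial H] (A : H →L[ℂ] H)
    (hsa : ∀ φ ψ : H, ⟪A φ, ψ⟫_ℂ = ⟪φ, A ψ⟫_ℂ)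
    (hneg : ∀ φ : H, (⟪φ, A φ⟫_ℂ).re ≤ 0)
    (hker : ∀ φ : H, A φ = 0 → φ = 0) :
    List.TFAE
      [ (∀ t : ℝ, 0 < t → ‖NormedSpace.exp (t • A)‖ = 1),
        (⨅ φ : {ψ : H // ψ ≠ 0}, ‖A φ.1‖ / ‖φ.1‖) = 0,
        (⨆ φ : {ψ : H // ψ ≠ 0}, (⟪φ.1, A φ.1⟫_ℂ).re / ‖φ.1‖ ^ 2) = 0,
        (∀ ε : ℝ, 0 < ε → ∃ l ∈ spectrum ℂ A, 0 < ‖l‖ ∧ ‖l‖ < ε) ] := by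
  have hA : IsSelfAdjoint A := isSelfAdjoint_iff_isSymmetric.mpr hsa
  have hA0 : A ≤ 0 := by
    simpa using (le_algebraMap_iff_forall_reApplyInnerSelf_le hA 0).mpr fun φ => by
      simpa [reApplyInnerSelf_apply, inner_re_symm] using hneg φ
  have hray : (fun φ : {ψ : H // ψ ≠ 0} => (⟪φ.1, A φ.1⟫_ℂ).re / ‖φ.1‖ ^ 2) =
      fun φ => A.rayleighQuotient φ.1 := by
    funext φ
    rw [rayleighQuotient, reApplyInnerSelf_apply, inner_re_symm]
    rfl
  have hmul : ∀ p : H →L[ℂ] H, A * p = 0 → p = 0 := fun p h =>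
    ext fun φ => hker _ congr($h φ)
  have := hA.isStarNormal
  refine List.tfae_of_forall (¬IsUnit A) _ ?_
  simp only [List.mem_cons, List.not_mem_nil, or_false, forall_eq_or_imp, forall_eq]
  exact ⟨forall_norm_exp_smul_eq_one_iff_not_isUnit hA0, hA.iInf_norm_apply_div_norm_eq_zero_iff,
    hray ▸ iSup_rayleighQuotient_eq_zero_iff hA0,
    forall_exists_mem_spectrum_norm_lt_iff_not_isUnit hmul⟩

/-- **Gaplessness Criteria** (Theorem 1, abstract form). For a bounded self-adjoint
negative-semidefinite operator `A` with trivial kernel on a nontrivial complex Hilbert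
space, the four conditions (a), (b), (c), (d) are equivalent. -/
theorem gaplessness_criteria
    {H : Type*} [NormedAddCommGroup H] [InnerProductSpace ℂ H] [CompleteSpace H]
    [Nontrivial H] (A : H →L[ℂ] H)
    (hsa : ∀ φ ψ : H, ⟪A φ, ψ⟫_ℂ = ⟪φ, A ψ⟫_ℂ)
    (hreal : ∀ φ : H, (⟪φ, A φ⟫_ℂ).im = 0)
    (hneg : ∀ φ : H, (⟪φ, A φ⟫_ℂ).re ≤ 0)
    (hker : ∀ φ : H, A φ = 0 → φ = 0) :
    List.TFAE
      [ (∀ t : ℝ, 0 < t → ‖NormedSpace.exp (t • A)‖ = 1),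
        (⨅ φ : {ψ : H // ψ ≠ 0}, ‖A φ.1‖ / ‖φ.1‖) = 0,
        (⨆ φ : {ψ : H // ψ ≠ 0}, (⟪φ.1, A φ.1⟫_ℂ).re / ‖φ.1‖ ^ 2) = 0,
        (∀ ε : ℝ, 0 < ε → ∃ l ∈ spectrum ℂ A, 0 < ‖l‖ ∧ ‖l‖ < ε) ] :=
  gaplessness_criteria_general A hsa hneg hker
end

section
/- Implication (c)→(d) of the Gaplessness Criteria. Let H be a nontrivial complex Hilbert space and A : H → H a bounded self-adjoint negative semidefinite operator with trivial kernel. If the supremum over nonzero φ ∈ H of Re⟨φ, Aφ⟩/‖φ‖² equals 0, then 0 belongs to the spectrum of A and, moreover, 0 is an accumulation point of the spectrum: for every ε > 0 there exists λ in the spectrum of A with 0 < |λ| < ε. -/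
/-!
Put `s = spectrum ℝ A ⊆ (-∞, 0]`. If `max s = c < 0`, the continuous functional calculus gives
`A ≤ c`, so every Rayleigh quotient is at most `c` and their supremum cannot be `0`; hence
`0 = max s ∈ s`. If `0` were isolated in `s`, applying a continuous bump at `0` that vanishes on
the rest of `s` to `A` would give a nonzero operator `P` with `A * P = 0`, so `A` would have a
kernel.
-/

open scoped InnerProductSpace

theorem IsSelfAdjoint.exists_ne_zero_mul_eq_zero_of_isolated_zero {𝒜 : Type*} [CStarAlgebra 𝒜]
    {a : 𝒜} (ha : IsSelfAdjoint a) (h0 : (0 : ℝ) ∈ spectrum ℝ a) {ε : ℝ} (hε : 0 < ε)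
    (hgap : ∀ x ∈ spectrum ℝ a, x ≠ 0 → ε ≤ |x|) : ∃ p : 𝒜, p ≠ 0 ∧ a * p = 0 := by
  set f : ℝ → ℝ := fun x ↦ max 0 (1 - |x| / ε)
  have hf_vanish : ∀ x ∈ spectrum ℝ a, x * f x = 0 := by
    intro x hx
    rcases eq_or_ne x 0 with rfl | hx0
    · exact zero_mul _
    · have : 1 ≤ |x| / ε := (one_le_div hε).2 (hgap x hx hx0)
      simp [f, this]
  refine ⟨cfc f a, fun hp ↦ ?_, ?_⟩
  · have h1 : (1 : ℝ) ∈ spectrum ℝ (cfc f a) := by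
      rw [cfc_map_spectrum f a]
      exact ⟨0, h0, by simp [f]⟩
    rw [hp, spectrum.mem_iff] at h1
    simp at h1
  · calc a * cfc f a = cfc (fun x ↦ x * f x) a := by rw [cfc_mul (fun x ↦ x) f a, cfc_id' ℝ a]
      _ = cfc (0 : ℝ → ℝ) a := cfc_congr hf_vanish
      _ = 0 := cfc_zero ℝ a

namespace IsSelfAdjoint

variable {H : Type*} [NormedAddCommGroup H] [InnerProductSpace ℂ H] [CompleteSpace H]
  {A : H →L[ℂ] H}

open ContinuousLinearMap in
theorem re_inner_apply_self_le_of_spectrum_le (hA : IsSelfAdjoint A) {c : ℝ}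
    (hc : ∀ x ∈ spectrum ℝ A, x ≤ c) (φ : H) : (⟪φ, A φ⟫_ℂ).re ≤ c * ‖φ‖ ^ 2 := by
  have hpos := (le_def _ _).1 ((le_algebraMap_iff_spectrum_le hA).2 hc)
  have hcφ : (⟪φ, algebraMap ℝ (H →L[ℂ] H) c φ⟫_ℂ).re = c * ‖φ‖ ^ 2 := by
    rw [Algebra.algebraMap_eq_smul_one, smul_apply, one_apply_eq_self, ← Complex.coe_smul,
      inner_smul_right, Complex.re_ofReal_mul, ← inner_self_eq_norm_sq (𝕜 := ℂ)]
    rfl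
  have := hpos.re_inner_nonneg_right φ
  rw [sub_apply, inner_sub_right, map_sub, RCLike.re_to_complex, RCLike.re_to_complex, hcφ]
    at this
  linarith

theorem zero_mem_spectrum_of_iSup_re_inner_div_eq_zero [Nontrivial H] (hA : IsSelfAdjoint A)
    (hA0 : A ≤ 0) (hsup : (⨆ φ : {ψ : H // ψ ≠ 0}, (⟪φ.1, A φ.1⟫_ℂ).re / ‖φ.1‖ ^ 2) = 0) :
    (0 : ℝ) ∈ spectrum ℝ A := by
  have hcompact := spectrum.isCompact (𝕜 := ℝ) A
  have hmax : sSup (spectrum ℝ A) ∈ spectrum ℝ A :=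
    hcompact.sSup_mem (ContinuousFunctionalCalculus.spectrum_nonempty A hA)
  have hmax_nonpos : sSup (spectrum ℝ A) ≤ 0 :=
    (le_algebraMap_iff_spectrum_le hA).1 (by rwa [map_zero]) _ hmax
  have hmax_nonneg : 0 ≤ sSup (spectrum ℝ A) := by
    have : Nonempty {ψ : H // ψ ≠ 0} := nonempty_subtype.2 (exists_ne 0)
    refine hsup ▸ ciSup_le fun φ ↦ (div_le_iff₀ (pow_pos (norm_pos_iff.2 φ.2) 2)).2 ?_
    exact hA.re_inner_apply_self_le_of_spectrum_le (fun x hx ↦ le_csSup hcompact.bddAbove hx) _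
  rwa [le_antisymm hmax_nonpos hmax_nonneg] at hmax

end IsSelfAdjoint

theorem gapless_c_implies_d_general
    {H : Type*} [NormedAddCommGroup H] [InnerProductSpace ℂ H] [CompleteSpace H]
    [Nontrivial H] (A : H →L[ℂ] H)
    (hsa : ∀ φ ψ : H, ⟪A φ, ψ⟫_ℂ = ⟪φ, A ψ⟫_ℂ)
    (hneg : ∀ φ : H, (⟪φ, A φ⟫_ℂ).re ≤ 0)
    (hker : ∀ φ : H, A φ = 0 → φ = 0)
    (hc : (⨆ φ : {ψ : H // ψ ≠ 0}, (⟪φ.1, A φ.1⟫_ℂ).re / ‖φ.1‖ ^ 2) = 0) :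
    (0 : ℂ) ∈ spectrum ℂ A ∧
      ∀ ε : ℝ, 0 < ε → ∃ l ∈ spectrum ℂ A, 0 < ‖l‖ ∧ ‖l‖ < ε := by
  have hA : IsSelfAdjoint A := ContinuousLinearMap.isSelfAdjoint_iff_isSymmetric.2 hsa
  have hA0 : A ≤ 0 := by
    refine neg_nonneg.1 ((ContinuousLinearMap.nonneg_iff_isPositive _).2
      ⟨hA.neg.isSymmetric, fun φ ↦ ?_⟩)
    simpa [ContinuousLinearMap.reApplyInnerSelf] using
      (inner_re_symm (𝕜 := ℂ) (A φ) φ).trans_le (hneg φ)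
  have h0 := hA.zero_mem_spectrum_of_iSup_re_inner_div_eq_zero hA0 hc
  refine ⟨by simpa using spectrum.algebraMap_mem ℂ h0, fun ε hε ↦ ?_⟩
  obtain ⟨x, hx, hx0, hxε⟩ : ∃ x ∈ spectrum ℝ A, x ≠ 0 ∧ |x| < ε := by
    by_contra! hgap
    obtain ⟨P, hP, hAP⟩ := hA.exists_ne_zero_mul_eq_zero_of_isolated_zero h0 hε hgap
    obtain ⟨φ, hφ⟩ := DFunLike.ne_iff.1 hP
    exact hφ (hker _ congr($hAP φ))
  exact ⟨x, spectrum.algebraMap_mem ℂ hx, by simpa using hx0, by simpa using hxε⟩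

/-- Implication (c) → (d) of the Gaplessness Criteria: if `Re⟪φ, Aφ⟫/‖φ‖²` has
supremum `0` over nonzero `φ`, then `0` belongs to the spectrum of `A` and is an
accumulation point of the spectrum. -/
theorem gapless_c_implies_d
    {H : Type*} [NormedAddCommGroup H] [InnerProductSpace ℂ H] [CompleteSpace H]
    [Nontrivial H] (A : H →L[ℂ] H)
    (hsa : ∀ φ ψ : H, ⟪A φ, ψ⟫_ℂ = ⟪φ, A ψ⟫_ℂ)
    (hreal : ∀ φ : H, (⟪φ, A φ⟫_ℂ).im = 0)
    (hneg : ∀ φ : H, (⟪φ, A φ⟫_ℂ).re ≤ 0)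
    (hker : ∀ φ : H, A φ = 0 → φ = 0)
    (hc : (⨆ φ : {ψ : H // ψ ≠ 0}, (⟪φ.1, A φ.1⟫_ℂ).re / ‖φ.1‖ ^ 2) = 0) :
    (0 : ℂ) ∈ spectrum ℂ A ∧
      ∀ ε : ℝ, 0 < ε → ∃ l ∈ spectrum ℂ A, 0 < ‖l‖ ∧ ‖l‖ < ε :=
  gapless_c_implies_d_general A hsa hneg hker hc
end

section
/- Laguerre moment integral of order 4. For every natural number n, let L_n^{(5)} denote the generalized Laguerre polynomial of degree n and parameter 5, defined by L_n^{(5)}(x) = Σ_{k=0}^{n} (−1)^k · binomial(n+5, n−k) · x^k / k!. Then ∫_0^∞ x⁴ · e^{−x} · (L_n^{(5)}(x))² dx = (n+5)! / (5 · n!). -/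
/-!
Writing `L_n^{(5)}(x) = ∑ₖ aₖ xᵏ` and using `∫₀^∞ xᵐ e^{-x} dx = m!`, the integral becomes
`∑_{j,k} aⱼ aₖ (j + 4 + k)!`. For fixed `j ≤ n` the inner sum is
`(j + 4)! ∑ₖ (-1)ᵏ C(n + 5, n - k) C(j + 4 + k, k) = (j + 4)! C(n - j, n)` by Chu–Vandermonde
with the negative upper index `-(j + 5)`; it vanishes unless `j = 0`. Only `a₀ · 4! = 24 C(n + 5, n)`
survives, which is `(n + 5)! / (5 n!)`.
-/

open MeasureTheory

noncomputable def laguerre5 (n : ℕ) (x : ℝ) : ℝ :=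
  ∑ k ∈ Finset.range (n + 1),
    (-1 : ℝ) ^ k * (Nat.choose (n + 5) (n - k) : ℝ) * x ^ k / (Nat.factorial k : ℝ)

open Finset Nat Real Set

theorem Ring.choose_neg_natCast_succ (b k : ℕ) :
    Ring.choose (-((b + 1 : ℕ) : ℤ)) k = (-1) ^ k * ((b + k).choose k : ℤ) := by
  rw [Ring.choose_neg, Units.smul_def, Int.coe_negOnePow_natCast,
    show ((b + 1 : ℕ) : ℤ) + k - 1 = ((b + k : ℕ) : ℤ) by push_cast; ring, Ring.choose_natCast,
    smul_eq_mul]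

/-- Compare coefficients in `(1 + X) ^ (a + b + 1) * (1 + X) ^ (-(b + 1)) = (1 + X) ^ a`. -/
theorem sum_neg_one_pow_mul_choose_mul_choose (a b n : ℕ) :
    ∑ k ∈ range (n + 1), (-1 : ℤ) ^ k * (a + b + 1).choose (n - k) * (b + k).choose k
      = a.choose n := by
  have h := Ring.add_choose_eq (r := ((a + b + 1 : ℕ) : ℤ)) (s := -((b + 1 : ℕ) : ℤ)) n
    (Commute.all _ _)
  rw [show ((a + b + 1 : ℕ) : ℤ) + -((b + 1 : ℕ) : ℤ) = a by push_cast; ring, Ring.choose_natCast,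
    ← Nat.sum_antidiagonal_swap, Nat.sum_antidiagonal_eq_sum_range_succ_mk] at h
  rw [h]
  refine sum_congr rfl fun k _ => ?_
  rw [Prod.swap_prod_mk, Ring.choose_natCast, Ring.choose_neg_natCast_succ]
  ring

theorem integrableOn_pow_mul_exp_neg_Ici (m : ℕ) :
    IntegrableOn (fun x : ℝ => x ^ m * exp (-x)) (Ici 0) := by
  rw [integrableOn_Ici_iff_integrableOn_Ioi]
  refine (GammaIntegral_convergent (s := m + 1) (by positivity)).congr_fun
    (fun x _ => ?_) measurableSet_Ioi
  dsimp only
  rw [add_sub_cancel_right, rpow_natCast, mul_comm]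

theorem integral_pow_mul_exp_neg_Ici (m : ℕ) : ∫ x in Ici (0 : ℝ), x ^ m * exp (-x) = m ! := by
  rw [integral_Ici_eq_integral_Ioi, ← Gamma_nat_eq_factorial, Gamma_eq_integral (by positivity)]
  refine setIntegral_congr_fun measurableSet_Ioi fun x _ => ?_
  rw [add_sub_cancel_right, rpow_natCast, mul_comm]

theorem integral_sum_mul_pow_mul_exp_neg_Ici {ι : Type*} (s : Finset ι) (c : ι → ℝ)
    (e : ι → ℕ) :
    ∫ x in Ici (0 : ℝ), ∑ i ∈ s, c i * (x ^ e i * exp (-x)) = ∑ i ∈ s, c i * (e i)! := by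
  rw [integral_finsetSum _ fun i _ => (integrableOn_pow_mul_exp_neg_Ici (e i)).const_mul (c i)]
  simp only [integral_const_mul, integral_pow_mul_exp_neg_Ici]

noncomputable def laguerre5Coeff (n k : ℕ) : ℝ := (-1) ^ k * (n + 5).choose (n - k) / k !

theorem laguerre5_eq_sum (n : ℕ) (x : ℝ) :
    laguerre5 n x = ∑ k ∈ range (n + 1), laguerre5Coeff n k * x ^ k := by
  refine sum_congr rfl fun k _ => ?_
  rw [laguerre5Coeff]
  ring

theorem sum_laguerre5Coeff_mul_factorial {n j : ℕ} (hj : j ≤ n) :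
    ∑ k ∈ range (n + 1), laguerre5Coeff n k * (j + 4 + k)! = if j = 0 then 24 else 0 := by
  have hterm : ∀ k, laguerre5Coeff n k * (j + 4 + k)!
      = (j + 4)! * (((-1 : ℤ) ^ k * (n - j + (j + 4) + 1).choose (n - k)
          * (j + 4 + k).choose k : ℤ) : ℝ) := by
    intro k
    rw [laguerre5Coeff, show n - j + (j + 4) + 1 = n + 5 by omega,
      ← add_choose_mul_factorial_mul_factorial]
    have : (k ! : ℝ) ≠ 0 := by positivity
    push_cast
    field_simp
  rw [sum_congr rfl fun k _ => hterm k, ← mul_sum, ← Int.cast_sum,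
    sum_neg_one_pow_mul_choose_mul_choose]
  rcases Nat.eq_zero_or_pos j with rfl | hj0
  · simp [factorial]
  · rw [choose_eq_zero_of_lt (by omega)]
    simp [hj0.ne']

/-- Laguerre moment integral of order 4:
`∫_0^∞ x⁴ e^{−x} (L_n^{(5)}(x))² dx = (n+5)! / (5 n!)`. -/
theorem laguerre_moment_four (n : ℕ) :
    ∫ x in Set.Ici (0 : ℝ), x ^ 4 * Real.exp (-x) * (laguerre5 n x) ^ 2
      = (Nat.factorial (n + 5) : ℝ) / (5 * (Nat.factorial n : ℝ)) := by
  set c := laguerre5Coeff n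
  have hexpand : ∀ x : ℝ, x ^ 4 * exp (-x) * laguerre5 n x ^ 2
      = ∑ p ∈ range (n + 1) ×ˢ range (n + 1), c p.1 * c p.2 * (x ^ (p.1 + 4 + p.2) * exp (-x)) := by
    intro x
    rw [laguerre5_eq_sum, sq, sum_mul_sum, ← sum_product', mul_sum]
    refine sum_congr rfl fun p _ => ?_
    ring
  have hinner : ∀ j ∈ range (n + 1),
      c j * ∑ k ∈ range (n + 1), c k * (j + 4 + k)! = if j = 0 then c 0 * 24 else 0 := by
    intro j hj
    rw [sum_laguerre5Coeff_mul_factorial (Nat.lt_succ_iff.mp (Finset.mem_range.mp hj))]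
    split_ifs with h0 <;> simp [h0]
  simp_rw [hexpand]
  rw [integral_sum_mul_pow_mul_exp_neg_Ici, sum_product]
  simp_rw [mul_assoc, ← mul_sum]
  rw [sum_congr rfl hinner, sum_ite_eq' _ _ _, if_pos (by simp),
    show c 0 = ((n + 5).choose n : ℝ) by simp [c, laguerre5Coeff], cast_add_choose,
    show ((5 : ℕ) ! : ℝ) = 120 by norm_num [factorial]]
  field_simp
  ring
end

section
/- Power-law decay of a superposition of exponentially decaying modes. The series S(t) = Σ_{n=1}^∞ n^{−2} · e^{−t/n} converges for every t ≥ 0, and t · S(t) tends to 1 as t → +∞; that is, the superposition of modes with relaxation times τ_n = n and amplitudes 1/n² decays like 1/t at late times, slower than any exponential. -/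
/-!
The summand `t n⁻² e^{-t/n}` is the derivative at `x = n` of `x ↦ e^{-t/x}`, whose increments
over `[n, n + 1]` telescope to `1 - e^{-t}`. The defect between derivative and increment is
`O(n⁻²)` uniformly in `t ≥ 0` and tends to `0` as `t → ∞` for each `n`, so by dominated
convergence `t S(t) - (1 - e^{-t}) → 0`.
-/

open Filter Real Topology

lemma hasSum_sub_of_monotone_of_tendsto {f : ℕ → ℝ} {l : ℝ} (hf : Monotone f)
    (hl : Tendsto f atTop (𝓝 l)) : HasSum (fun n => f (n + 1) - f n) (l - f 0) := by
  rw [hasSum_iff_tendsto_nat_of_nonneg (fun n => sub_nonneg.2 (hf n.le_succ))]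
  simpa only [Finset.sum_range_sub] using hl.sub_const (f 0)

lemma sq_mul_exp_neg_le_two {v : ℝ} (hv : 0 ≤ v) : v ^ 2 * exp (-v) ≤ 2 := by
  rw [exp_neg, ← div_eq_mul_inv, div_le_iff₀ (exp_pos v)]
  nlinarith [quadratic_le_exp_of_nonneg hv]

lemma exp_sub_one_sub_le_sq_mul_exp {s : ℝ} (hs : 0 ≤ s) : exp s - 1 - s ≤ s ^ 2 * exp s := by
  have h : exp s - 1 ≤ s * exp s := by
    have := add_one_le_exp (-s)
    rw [exp_neg] at this
    nlinarith [exp_pos s, mul_inv_cancel₀ (exp_pos s).ne']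
  nlinarith [add_one_le_exp s]

lemma tendsto_exp_neg_div_atTop {c : ℝ} (hc : 0 < c) :
    Tendsto (fun t => exp (-t / c)) atTop (𝓝 0) := by
  simpa only [Function.comp_def, id, neg_div] using
    tendsto_exp_neg_atTop_nhds_zero.comp (tendsto_id.atTop_div_const hc)

lemma tendsto_mul_exp_neg_div_atTop {c : ℝ} (hc : 0 < c) :
    Tendsto (fun t => t * exp (-t / c)) atTop (𝓝 0) := by
  have := ((tendsto_pow_mul_exp_neg_atTop_nhds_zero 1).comp
    (tendsto_id.atTop_div_const hc)).const_mul c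
  rw [mul_zero] at this
  refine this.congr fun t => ?_
  simp only [Function.comp_apply, id, pow_one, neg_div]
  field_simp

lemma summable_one_div_nat_add_one_sq : Summable fun n : ℕ => 1 / ((n : ℝ) + 1) ^ 2 := by
  simpa using (summable_nat_add_iff 1).2 (summable_one_div_nat_pow.2 one_lt_two)

noncomputable def mode (t x : ℝ) : ℝ := 1 / x ^ 2 * exp (-t / x)

noncomputable def incrementDefect (t x : ℝ) : ℝ :=
  t * mode t x - (exp (-t / (x + 1)) - exp (-t / x))

lemma abs_incrementDefect_le {t x : ℝ} (ht : 0 ≤ t) (hx : 0 < x) :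
    |incrementDefect t x| ≤ 2 / x ^ 2 := by
  set s := t / (x * (x + 1))
  have hs : 0 ≤ s := by positivity
  have hshift : exp (-t / (x + 1)) = exp (-t / x) * exp s := by
    rw [← exp_add]; congr 1; simp only [s]; field_simp; ring
  have hsplit : incrementDefect t x
      = t / x * exp (-(t / x)) / (x * (x + 1)) - exp (-t / x) * (exp s - 1 - s) := by
    rw [incrementDefect, mode, hshift, neg_div]; simp only [s]; field_simp; ring
  rw [hsplit]
  apply abs_sub_le_of_nonneg_of_le (by positivity)
  · calc t / x * exp (-(t / x)) / (x * (x + 1)) ≤ 1 / (x * (x + 1)) := by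
          gcongr
          exact (mul_exp_neg_le_exp_neg_one _).trans (exp_le_one_iff.2 (by norm_num))
      _ ≤ 2 / x ^ 2 := by
          rw [div_le_div_iff₀ (by positivity) (by positivity)]; nlinarith
  · exact mul_nonneg (exp_pos _).le (by linarith [add_one_le_exp s])
  · calc exp (-t / x) * (exp s - 1 - s) ≤ exp (-t / x) * (s ^ 2 * exp s) := by
          gcongr; exact exp_sub_one_sub_le_sq_mul_exp hs
      _ = (t / (x + 1)) ^ 2 * exp (-(t / (x + 1))) / x ^ 2 := by
          rw [← neg_div, hshift]; simp only [s]; field_simp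
      _ ≤ 2 / x ^ 2 := by gcongr; exact sq_mul_exp_neg_le_two (by positivity)

lemma tendsto_incrementDefect_atTop {x : ℝ} (hx : 0 < x) :
    Tendsto (fun t => incrementDefect t x) atTop (𝓝 0) := by
  have hmode : Tendsto (fun t => t * mode t x) atTop (𝓝 0) := by
    simpa only [mode, mul_zero, mul_left_comm] using
      (tendsto_mul_exp_neg_div_atTop hx).const_mul (1 / x ^ 2)
  simpa [incrementDefect] using hmode.sub ((tendsto_exp_neg_div_atTop (by positivity)).sub
    (tendsto_exp_neg_div_atTop hx))

lemma summable_mode {t : ℝ} (ht : 0 ≤ t) : Summable fun n : ℕ => mode t (n + 1) := by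
  refine summable_one_div_nat_add_one_sq.of_nonneg_of_le (fun n => by unfold mode; positivity)
    fun n => mul_le_of_le_one_right (by positivity) (exp_le_one_iff.2 ?_)
  exact div_nonpos_of_nonpos_of_nonneg (neg_nonpos.2 ht) (by positivity)

lemma hasSum_incrementDefect {t : ℝ} (ht : 0 ≤ t) :
    HasSum (fun n : ℕ => incrementDefect t (n + 1))
      (t * ∑' n : ℕ, mode t (n + 1) - (1 - exp (-t))) := by
  have htele : HasSum (fun n : ℕ => exp (-t / ((n : ℝ) + 1 + 1)) - exp (-t / ((n : ℝ) + 1)))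
      (1 - exp (-t)) := by
    have hmono : Monotone fun n : ℕ => exp (-t / ((n : ℝ) + 1)) := fun m n hmn => by
      simp only [neg_div]
      gcongr
    have hlim : Tendsto (fun n : ℕ => exp (-t / ((n : ℝ) + 1))) atTop (𝓝 1) := by
      simpa [neg_div, div_eq_mul_inv] using
        (tendsto_one_div_add_atTop_nhds_zero_nat.const_mul (-t)).rexp
    simpa using hasSum_sub_of_monotone_of_tendsto hmono hlim
  simpa [incrementDefect] using ((summable_mode ht).hasSum.mul_left t).sub htele

lemma tendsto_tsum_incrementDefect_atTop :
    Tendsto (fun t => ∑' n : ℕ, incrementDefect t (n + 1)) atTop (𝓝 0) := by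
  have := tendsto_tsum_of_dominated_convergence (summable_one_div_nat_add_one_sq.mul_left 2)
    (fun n => tendsto_incrementDefect_atTop n.cast_add_one_pos) ?_
  · simpa using this
  filter_upwards [eventually_ge_atTop 0] with t ht n
  simpa only [Real.norm_eq_abs, mul_one_div] using abs_incrementDefect_le ht n.cast_add_one_pos

/-- Power-law decay of a superposition of exponentially decaying modes:
`S(t) = ∑_{n=1}^∞ n⁻² e^{−t/n}` converges for every `t ≥ 0`, and `t · S(t) → 1`
as `t → +∞`. Here the sum over `n ≥ 1` is indexed by `n : ℕ` via `n + 1`. -/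
theorem power_law_superposition :
    (∀ t : ℝ, 0 ≤ t →
      Summable (fun n : ℕ => (1 / ((n : ℝ) + 1) ^ 2) * Real.exp (-t / ((n : ℝ) + 1)))) ∧
      Filter.Tendsto
        (fun t : ℝ =>
          t * ∑' n : ℕ, (1 / ((n : ℝ) + 1) ^ 2) * Real.exp (-t / ((n : ℝ) + 1)))
        Filter.atTop (nhds 1) := by
  refine ⟨fun t ht => summable_mode ht, ?_⟩
  have hlim :=
    (tendsto_exp_neg_atTop_nhds_zero.const_sub 1).add tendsto_tsum_incrementDefect_atTop
  rw [sub_zero, add_zero] at hlim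
  refine hlim.congr' ?_
  filter_upwards [eventually_ge_atTop 0] with t ht
  rw [(hasSum_incrementDefect ht).tsum_eq]
  simp only [mode]
  ring
end
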